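/- Let P be a set of atoms of L and let D^{COMP^P} = { :{q}/q : q a P-literal } be the set of prerequisite-free normal defaults whose justification and consequent is a P-literal. For every consistent theory W: a theory T is an extension of (D^{COMP^P}, W) if and only if T is inclusion-minimal among the theories that are P-complete and contain W. -/
import Mathlib


/-- Propositional formulas over a set of atoms `α`. -/
inductive PropForm (α : Type) : Type
  | atom : α → PropForm α
  | fls  : PropForm α
  | impl : PropForm α → PropForm α → PropForm α

namespace PropForm

/-- Negation `¬φ`, definable as `φ → ⊥`. -/
def neg {α : Type} (φ : PropForm α) : PropForm α := impl φ fls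

/-- Conjunction, definable from implication and falsum. -/
def conj {α : Type} (φ ψ : PropForm α) : PropForm α := (φ.impl ψ.neg).neg

/-- Biimplication `φ ↔ ψ`. -/
def biimp {α : Type} (φ ψ : PropForm α) : PropForm α := conj (φ.impl ψ) (ψ.impl φ)

/-- Evaluation of a formula under a valuation of the atoms. -/
def eval {α : Type} (v : α → Prop) : PropForm α → Prop
  | atom a   => v a
  | fls      => False
  | impl φ ψ => eval v φ → eval v ψ

/-- Renaming/embedding of atoms. -/
def map {α β : Type} (f : α → β) : PropForm α → PropForm β
  | atom a   => atom (f a)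
  | fls      => fls
  | impl φ ψ => impl (map f φ) (map f ψ)

end PropForm

/-- Classical propositional consequence operator. -/
def Cn {α : Type} (S : Set (PropForm α)) : Set (PropForm α) :=
  {φ | ∀ v : α → Prop, (∀ ψ ∈ S, ψ.eval v) → φ.eval v}

/-- A theory: a set of formulas closed under propositional consequence. -/
def IsTheory {α : Type} (S : Set (PropForm α)) : Prop := Cn S ⊆ S

/-- A set of formulas is consistent if its consequences are not the whole language. -/
def Consistent {α : Type} (S : Set (PropForm α)) : Prop := Cn S ≠ Set.univ

/-- A default `α : Γ / β` with prerequisite, finite set of justifications, consequent. -/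
structure Default (α : Type) where
  pre : PropForm α
  jus : Finset (PropForm α)
  con : PropForm α

/-- A default is applicable w.r.t. `S` if no justification's negation follows from `S`. -/
def Default.Applicable {α : Type} (S : Set (PropForm α)) (d : Default α) : Prop :=
  ∀ γ ∈ d.jus, γ.neg ∉ Cn S

/-- The reduct of `D` w.r.t. `S`: the monotone rules `pre/con` of `S`-applicable defaults. -/
def Reduct {α : Type} (D : Set (Default α)) (S : Set (PropForm α)) :
    Set (PropForm α × PropForm α) :=
  {r | ∃ d ∈ D, d.Applicable S ∧ r = (d.pre, d.con)}

/-- `Cn^B(W)`: consequences of `W` in propositional calculus augmented with rules `B`;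
the least set containing `W`, closed under `Cn`, and closed under the rules of `B`. -/
def CnRules {α : Type} (B : Set (PropForm α × PropForm α)) (W : Set (PropForm α)) :
    Set (PropForm α) :=
  ⋂₀ {S | W ⊆ S ∧ Cn S ⊆ S ∧ ∀ r ∈ B, r.1 ∈ S → r.2 ∈ S}

/-- `S` is an extension of the default theory `(D, W)`. -/
def IsExtension {α : Type} (D : Set (Default α)) (W S : Set (PropForm α)) : Prop :=
  S = CnRules (Reduct D S) W

/-- The family of all extensions of `(D, W)`. -/
def ext {α : Type} (D : Set (Default α)) (W : Set (PropForm α)) : Set (Set (PropForm α)) :=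
  {S | IsExtension D W S}

/-- A default is prerequisite-free if its prerequisite is a tautology. -/
def Default.PrereqFree {α : Type} (d : Default α) : Prop :=
  d.pre ∈ Cn (∅ : Set (PropForm α))

/-- A default is normal if it has the form `α : {β} / β`. -/
def Default.Normal {α : Type} (d : Default α) : Prop := d.jus = {d.con}

section AuxLemmas

variable {α : Type}

lemma subset_Cn (S : Set (PropForm α)) : S ⊆ Cn S :=
  fun _ hφ _ hv => hv _ hφ

lemma Cn_mono {S S' : Set (PropForm α)} (h : S ⊆ S') : Cn S ⊆ Cn S' :=
  fun _ hφ v hv => hφ v (fun ψ hψ => hv ψ (h hψ))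

lemma Cn_Cn (S : Set (PropForm α)) : Cn (Cn S) = Cn S :=
  Set.Subset.antisymm (fun _ hφ v hv => hφ v (fun _ hψ => hψ v hv)) (subset_Cn _)

lemma cnrules_eq (P : Set α) (D : Set (Default α))
    (hD : D = {d | ∃ q : PropForm α,
      (∃ p ∈ P, q = PropForm.atom p ∨ q = (PropForm.atom p).neg) ∧
      d = ⟨PropForm.fls.neg, {q}, q⟩})
    (W T : Set (PropForm α)) :
    CnRules (Reduct D T) W =
      Cn (W ∪ {q | (∃ p ∈ P, q = PropForm.atom p ∨ q = (PropForm.atom p).neg) ∧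
        PropForm.neg q ∉ Cn T}) := by
  subst hD
  apply Set.Subset.antisymm
  · intro φ hφ
    apply hφ
    refine ⟨fun ψ hψ => subset_Cn _ (Or.inl hψ), le_of_eq (Cn_Cn _), ?_⟩
    rintro ⟨a, b⟩ ⟨d, ⟨q, hq, rfl⟩, happ, heq⟩ hpre
    simp only [Prod.mk.injEq] at heq
    obtain ⟨rfl, rfl⟩ := heq
    exact subset_Cn _ (Or.inr ⟨hq, happ _ (Finset.mem_singleton_self _)⟩)
  · rintro φ hφ S ⟨hWS, hCnS, hrules⟩
    refine hCnS (Cn_mono ?_ hφ)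
    rintro ψ (hψ | ⟨hlit, hneg⟩)
    · exact hWS hψ
    · refine hrules (PropForm.fls.neg, ψ)
        ⟨⟨PropForm.fls.neg, {ψ}, ψ⟩, ⟨ψ, hlit, rfl⟩, ?_, rfl⟩ ?_
      · intro γ hγ
        rw [Finset.mem_singleton] at hγ
        subst hγ
        exact hneg
      · exact hCnS (fun v _ => fun h => h)

end AuxLemmas

/-- extensions of `(D^{COMP^P}, W)` are exactly the inclusion-minimal
`P`-complete theories containing the consistent theory `W`. -/
theorem ext_COMP_iff_minimal_P_complete {α : Type} [Denumerable α]
    (P : Set α) (D : Set (Default α))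
    (hD : D = {d | ∃ q : PropForm α,
      (∃ p ∈ P, q = PropForm.atom p ∨ q = (PropForm.atom p).neg) ∧
      d = ⟨PropForm.fls.neg, {q}, q⟩})
    (W : Set (PropForm α)) (hWth : IsTheory W) (hWcons : Consistent W)
    (T : Set (PropForm α)) :
    IsExtension D W T ↔
      (IsTheory T ∧ (∀ p ∈ P, PropForm.atom p ∈ T ∨ (PropForm.atom p).neg ∈ T) ∧
        W ⊆ T ∧
        ∀ T' : Set (PropForm α), IsTheory T' →
          (∀ p ∈ P, PropForm.atom p ∈ T' ∨ (PropForm.atom p).neg ∈ T') →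
          W ⊆ T' → T' ⊆ T → T' = T) := by
  have hQ := cnrules_eq P D hD W T
  unfold IsExtension
  rw [hQ]
  set Q : Set (PropForm α) := {q | (∃ p ∈ P, q = PropForm.atom p ∨ q = (PropForm.atom p).neg) ∧
    PropForm.neg q ∉ Cn T} with hQdef
  constructor
  · intro h
    have hTh : IsTheory T := by
      intro φ hφ
      rw [h] at hφ ⊢
      exact le_of_eq (Cn_Cn _) hφ
    have hCnT : Cn T = T := Set.Subset.antisymm hTh (subset_Cn T)
    have hWT : W ⊆ T := by
      rw [h]; exact fun φ hφ => subset_Cn _ (Or.inl hφ)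
    have hQT : Q ⊆ T := by
      rw [h]; exact fun q hq => subset_Cn _ (Or.inr hq)
    refine ⟨hTh, ?_, hWT, ?_⟩
    · intro p hp
      by_cases hc : PropForm.neg (PropForm.atom p) ∈ Cn T
      · exact Or.inr (hCnT ▸ hc)
      · exact Or.inl (hQT ⟨⟨p, hp, Or.inl rfl⟩, hc⟩)
    · intro T' hT'th hT'comp hWT' hT'T
      refine Set.Subset.antisymm hT'T ?_
      rw [h]
      intro φ hφ
      refine hT'th (Cn_mono ?_ hφ)
      rintro ψ (hψ | ⟨⟨p, hp, hcase⟩, hneg⟩)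
      · exact hWT' hψ
      · rcases hcase with rfl | rfl
        · rcases hT'comp p hp with h1 | h1
          · exact h1
          · exact absurd (subset_Cn T (hT'T h1)) hneg
        · rcases hT'comp p hp with h1 | h1
          · exact absurd (fun v hv h2 => h2 (hv _ (hT'T h1))) hneg
          · exact h1
  · rintro ⟨hTh, hcomp, hWT, hmin⟩
    have hCnT : Cn T = T := Set.Subset.antisymm hTh (subset_Cn T)
    have hcons : PropForm.fls ∉ T := by
      intro hfls
      have hTuniv : ∀ ψ : PropForm α, ψ ∈ T :=
        fun ψ => hTh (fun v hv => (hv _ hfls).elim)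
      obtain ⟨φ, hφ⟩ : ∃ φ, φ ∉ Cn W := by
        by_contra hcon
        push_neg at hcon
        exact hWcons (Set.eq_univ_of_forall hcon)
      simp only [Cn, Set.mem_setOf_eq] at hφ
      push_neg at hφ
      obtain ⟨v, hv, -⟩ := hφ
      have hTv := hmin {ψ | ψ.eval v} (fun ψ hψ => hψ v (fun χ hχ => hχ))
        (fun p hp => by
          by_cases h : v p
          · exact Or.inl h
          · exact Or.inr h)
        hv (fun ψ _ => hTuniv ψ)
      have : PropForm.fls ∈ {ψ | ψ.eval v} := hTv.symm ▸ hTuniv PropForm.fls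
      exact this
    have hQT : Q ⊆ T := by
      rintro q ⟨⟨p, hp, hcase⟩, hneg⟩
      rcases hcase with rfl | rfl
      · rcases hcomp p hp with h1 | h1
        · exact h1
        · exact absurd (subset_Cn T h1) hneg
      · rcases hcomp p hp with h1 | h1
        · exact absurd (fun v hv h2 => h2 (hv _ h1)) hneg
        · exact h1
    have hsup : Cn (W ∪ Q) ⊆ T :=
      fun φ hφ => hTh (Cn_mono (Set.union_subset hWT hQT) hφ)
    have hEcomp : ∀ p ∈ P,
        PropForm.atom p ∈ Cn (W ∪ Q) ∨ (PropForm.atom p).neg ∈ Cn (W ∪ Q) := by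
      intro p hp
      by_cases hc : (PropForm.atom p).neg ∈ Cn T
      · right
        refine subset_Cn _ (Or.inr ⟨⟨p, hp, Or.inr rfl⟩, ?_⟩)
        intro hdn
        refine hcons (hTh ?_)
        intro v hv
        have h1 : PropForm.eval v ((PropForm.atom p).neg) := hv _ (hCnT ▸ hc)
        have h2 : PropForm.eval v ((PropForm.atom p).neg.neg) := hv _ (hCnT ▸ hdn)
        exact h2 h1
      · exact Or.inl (subset_Cn _ (Or.inr ⟨⟨p, hp, Or.inl rfl⟩, hc⟩))
    exact (hmin (Cn (W ∪ Q)) (le_of_eq (Cn_Cn _)) hEcomp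
      (fun φ hφ => subset_Cn _ (Or.inl hφ)) hsup).symm
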